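/- The map I: {1,2,4,7,8,10,11,12,13,14,16,17,18,20,21,22} → F_2^4 defined by I(1)=(0,0,0,0), I(2)=(0,0,1,1), I(4)=(0,1,1,0), I(7)=(1,1,1,1), I(8)=(1,0,0,1), I(10)=(1,1,0,1), I(11)=(1,0,0,0), I(12)=(0,1,1,1), I(13)=(0,1,0,0), I(14)=(0,0,1,0), I(16)=(1,0,1,0), I(17)=(0,0,0,1), I(18)=(0,1,0,1), I(20)=(1,1,1,0), I(21)=(1,1,0,0), I(22)=(1,0,1,1) is a bijection, and for each i ∈ {1,2,3,4} the image under I of the octad H_i (for i=1,...,4 as listed) equals the linear hyperplane { a ∈ F_2^4 : a_i = 0 }. -/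

import Mathlib

/-- The hypercube `𝔽₂⁴`. -/
abbrev F16 := Fin 4 → ZMod 2

/-- Shorthand for a vector in `𝔽₂⁴`. -/
def v4 (a b c d : ZMod 2) : F16 := ![a, b, c, d]

/-- The complement of the octad `𝒪₉ = {3,5,6,9,15,19,23,24}` in `{1,…,24}`. -/
def O9compl : Finset ℕ := {1, 2, 4, 7, 8, 10, 11, 12, 13, 14, 16, 17, 18, 20, 21, 22}

/-- The labelling map `I` from the complement of `𝒪₉` to the hypercube `𝔽₂⁴`. -/
def Imap : ℕ → F16
  | 1 => v4 0 0 0 0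
  | 2 => v4 0 0 1 1
  | 4 => v4 0 1 1 0
  | 7 => v4 1 1 1 1
  | 8 => v4 1 0 0 1
  | 10 => v4 1 1 0 1
  | 11 => v4 1 0 0 0
  | 12 => v4 0 1 1 1
  | 13 => v4 0 1 0 0
  | 14 => v4 0 0 1 0
  | 16 => v4 1 0 1 0
  | 17 => v4 0 0 0 1
  | 18 => v4 0 1 0 1
  | 20 => v4 1 1 1 0
  | 21 => v4 1 1 0 0
  | 22 => v4 1 0 1 1
  | _ => v4 0 0 0 0

/-- The first four of the octads `ℋ₁, …, ℋ₅` disjoint from `𝒪₉`. -/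
def Hocts4 : Fin 4 → Finset ℕ :=
  ![{1,2,4,12,13,14,17,18}, {1,2,8,11,14,16,17,22}, {1,8,10,11,13,17,18,21},
    {1,4,11,13,14,16,20,21}]

theorem image_Imap_O9compl : O9compl.image Imap = Finset.univ := by decide

theorem image_Imap_Hocts4 (i : Fin 4) :
    (Hocts4 i).image Imap = Finset.univ.filter (fun a : F16 => a i = 0) := by
  revert i
  decide

theorem Imap_bijection_hyperplanes :
    Set.BijOn Imap ↑O9compl Set.univ ∧
    ∀ i : Fin 4, Imap '' ↑(Hocts4 i) = { a : F16 | a i = 0 } := by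
  have hsurj : Set.SurjOn Imap O9compl Set.univ := by
    rw [Set.SurjOn, ← Finset.coe_image, image_Imap_O9compl, Finset.coe_univ]
  -- `O9compl` and `𝔽₂⁴` both have 16 elements, so surjectivity forces injectivity.
  have hinj : Set.InjOn Imap O9compl :=
    Finset.injOn_of_card_image_eq (by rw [image_Imap_O9compl]; rfl)
  refine ⟨⟨Set.mapsTo_univ _ _, hinj, hsurj⟩, fun i => ?_⟩
  rw [← Finset.coe_image, image_Imap_Hocts4, Finset.coe_filter_univ]
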